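/- arXiv:0803.1365 — 6 statements merged into one kernel-verified Lean document; each statement's English description precedes it below -/
import Mathlib

section
/- Let μ be a nonzero finite positive Borel measure on (0,∞). Let φ, ψ, θ be index functions such that θ, φ·θ and ψ·θ are μ-integrable and ∫θ dμ > 0. Let Φ, Ψ : (0,∞) → (0,∞) be concave functions, and suppose that 1 ≤ Φ(φ(λ))·Ψ(ψ(λ)) for μ-almost every λ ∈ (0,∞). Then 1 ≤ Φ( (∫φθ dμ)/(∫θ dμ) ) · Ψ( (∫ψθ dμ)/(∫θ dμ) ). -/
/-!
At every point where `Φ(φ)·Ψ(ψ) ≥ 1`, the arithmetic–geometric mean inequality gives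
`2 ≤ t·Φ(φ) + Ψ(ψ)/t` for each `t > 0`. Bounding `Φ` and `Ψ` from above by their supporting lines at
the `θ`-weighted means of `φ` and `ψ` and integrating against `θ dμ` (Jensen's inequality) turns
this into `2 ≤ t·Φ(m_φ) + Ψ(m_ψ)/t`, and minimising over `t` yields `1 ≤ Φ(m_φ)·Ψ(m_ψ)`.
-/

open MeasureTheory Set

theorem ConvexOn.add_rightDeriv_mul_sub_le {S : Set ℝ} {f : ℝ → ℝ} (hf : ConvexOn ℝ S f)
    {x y : ℝ} (hx : x ∈ interior S) (hy : y ∈ S) :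
    f x + derivWithin f (Ioi x) x * (y - x) ≤ f y := by
  rcases lt_trichotomy x y with hxy | rfl | hyx
  · have h := hf.rightDeriv_le_slope_of_mem_interior hx hy hxy
    rw [slope_def_field, le_div_iff₀ (sub_pos.2 hxy)] at h
    linarith
  · simp
  · have h := (hf.slope_le_leftDeriv_of_mem_interior hy hx hyx).trans
      (hf.leftDeriv_le_rightDeriv_of_mem_interior hx)
    rw [slope_def_field, div_le_iff₀ (sub_pos.2 hyx)] at h
    linarith

theorem ConcaveOn.exists_le_add_mul_sub {S : Set ℝ} {f : ℝ → ℝ} (hf : ConcaveOn ℝ S f)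
    {x : ℝ} (hx : x ∈ interior S) : ∃ a, ∀ y ∈ S, f y ≤ f x + a * (y - x) :=
  ⟨-derivWithin (-f) (Ioi x) x, fun y hy => by
    have h := hf.neg.add_rightDeriv_mul_sub_le hx hy
    simp only [Pi.neg_apply] at h
    linarith⟩

theorem two_le_mul_add_div_of_one_le_mul {t x y : ℝ} (ht : 0 < t) (hx : 0 < x)
    (hxy : 1 ≤ x * y) : 2 ≤ t * x + y / t := by
  have hy : 0 < y := pos_of_mul_pos_right (one_pos.trans_le hxy) hx.le
  have hprod : t * x * (y / t) = x * y := by field_simp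
  nlinarith [sq_nonneg (t * x - y / t), mul_pos ht hx, div_pos hy ht]

theorem one_le_mul_of_forall_two_le_mul_add_div {A B : ℝ} (hA : 0 < A) (hB : 0 < B)
    (h : ∀ t, 0 < t → 2 ≤ t * A + B / t) : 1 ≤ A * B := by
  have hsA := Real.sqrt_pos.2 hA
  have hsB := Real.sqrt_pos.2 hB
  have h2 := h (√B / √A) (div_pos hsB hsA)
  have hAB : √B / √A * A + B / (√B / √A) = 2 * √(A * B) := by
    rw [Real.sqrt_mul hA.le]
    field_simp
    rw [Real.sq_sqrt hA.le, Real.sq_sqrt hB.le]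
    ring
  rw [hAB] at h2
  nlinarith [Real.sq_sqrt (mul_pos hA hB).le]

section WeightedMean

variable {α : Type*} [MeasurableSpace α] {μ : Measure α} {φ θ : α → ℝ}

noncomputable def weightedMean (μ : Measure α) (θ φ : α → ℝ) : ℝ :=
  (∫ x, φ x * θ x ∂μ) / ∫ x, θ x ∂μ

theorem integral_pos_of_ae_pos {f : α → ℝ} (hf : ∀ᵐ x ∂μ, 0 < f x) (hfi : Integrable f μ)
    (hμ : μ ≠ 0) : 0 < ∫ x, f x ∂μ := by
  refine (integral_nonneg_of_ae (hf.mono fun _ hx => hx.le)).lt_of_ne fun h => ?_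
  have hzero := (integral_eq_zero_iff_of_nonneg_ae (hf.mono fun _ hx => hx.le) hfi).1 h.symm
  have := ae_neBot.2 hμ
  obtain ⟨x, hpos, hx⟩ := (hf.and hzero).exists
  exact hpos.ne' hx

theorem weightedMean_pos (hφ : ∀ᵐ x ∂μ, 0 < φ x) (hθ : ∀ᵐ x ∂μ, 0 < θ x)
    (hφθi : Integrable (fun x => φ x * θ x) μ) (hθpos : 0 < ∫ x, θ x ∂μ) :
    0 < weightedMean μ θ φ := by
  have hμ : μ ≠ 0 := by
    rintro rfl
    simp at hθpos
  refine div_pos (integral_pos_of_ae_pos ?_ hφθi hμ) hθpos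
  filter_upwards [hφ, hθ] with x hφx hθx using mul_pos hφx hθx

theorem integral_sub_weightedMean_mul_eq_zero (hθi : Integrable θ μ)
    (hφθi : Integrable (fun x => φ x * θ x) μ) (hθ : ∫ x, θ x ∂μ ≠ 0) :
    ∫ x, (φ x - weightedMean μ θ φ) * θ x ∂μ = 0 := by
  simp_rw [sub_mul]
  rw [integral_sub hφθi (hθi.const_mul _), integral_const_mul, weightedMean,
    div_mul_cancel₀ _ hθ, sub_self]

/-- Jensen's inequality for the weight `θ`, in a form that needs no measurability of `Φ ∘ φ`. -/
theorem ConcaveOn.exists_integrable_majorant {S : Set ℝ} {Φ : ℝ → ℝ} (hΦ : ConcaveOn ℝ S Φ)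
    (hφS : ∀ᵐ x ∂μ, φ x ∈ S) (hθ : 0 ≤ᵐ[μ] θ) (hθi : Integrable θ μ)
    (hφθi : Integrable (fun x => φ x * θ x) μ) (hθ0 : ∫ x, θ x ∂μ ≠ 0)
    (hm : weightedMean μ θ φ ∈ interior S) :
    ∃ g : α → ℝ, Integrable g μ ∧ (∀ᵐ x ∂μ, Φ (φ x) * θ x ≤ g x) ∧
      ∫ x, g x ∂μ = Φ (weightedMean μ θ φ) * ∫ x, θ x ∂μ := by
  set m := weightedMean μ θ φ
  obtain ⟨a, ha⟩ := hΦ.exists_le_add_mul_sub hm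
  have hdev : Integrable (fun x => (φ x - m) * θ x) μ := by
    simp_rw [sub_mul]
    exact hφθi.sub (hθi.const_mul m)
  refine ⟨fun x => Φ m * θ x + a * ((φ x - m) * θ x),
    (hθi.const_mul _).add (hdev.const_mul a), ?_, ?_⟩
  · filter_upwards [hφS, hθ] with x hx hθx
    have h := mul_le_mul_of_nonneg_right (ha _ hx) hθx
    linarith
  · rw [integral_add (hθi.const_mul _) (hdev.const_mul a), integral_const_mul, integral_const_mul,
      integral_sub_weightedMean_mul_eq_zero hθi hφθi hθ0, mul_zero, add_zero]

theorem ConcaveOn.two_le_mul_add_div_weightedMean {S S' : Set ℝ} {Φ Ψ : ℝ → ℝ} {ψ : α → ℝ}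
    (hΦ : ConcaveOn ℝ S Φ) (hΨ : ConcaveOn ℝ S' Ψ)
    (hφS : ∀ᵐ x ∂μ, φ x ∈ S) (hψS : ∀ᵐ x ∂μ, ψ x ∈ S') (hθ : 0 ≤ᵐ[μ] θ)
    (hθi : Integrable θ μ) (hφθi : Integrable (fun x => φ x * θ x) μ)
    (hψθi : Integrable (fun x => ψ x * θ x) μ) (hθpos : 0 < ∫ x, θ x ∂μ)
    (hmφ : weightedMean μ θ φ ∈ interior S) (hmψ : weightedMean μ θ ψ ∈ interior S')
    (hΦpos : ∀ᵐ x ∂μ, 0 < Φ (φ x)) (hΦΨ : ∀ᵐ x ∂μ, 1 ≤ Φ (φ x) * Ψ (ψ x))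
    {t : ℝ} (ht : 0 < t) :
    2 ≤ t * Φ (weightedMean μ θ φ) + Ψ (weightedMean μ θ ψ) / t := by
  obtain ⟨g, hgi, hΦg, hg⟩ := hΦ.exists_integrable_majorant hφS hθ hθi hφθi hθpos.ne' hmφ
  obtain ⟨h, hhi, hΨh, hh⟩ := hΨ.exists_integrable_majorant hψS hθ hθi hψθi hθpos.ne' hmψ
  have hpointwise : ∀ᵐ x ∂μ, 2 * θ x ≤ t * g x + h x / t := by
    filter_upwards [hθ, hΦpos, hΦΨ, hΦg, hΨh] with x hθx hΦx hΦΨx hgx hhx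
    calc 2 * θ x ≤ (t * Φ (φ x) + Ψ (ψ x) / t) * θ x :=
          mul_le_mul_of_nonneg_right (two_le_mul_add_div_of_one_le_mul ht hΦx hΦΨx) hθx
      _ = t * (Φ (φ x) * θ x) + Ψ (ψ x) * θ x / t := by ring
      _ ≤ t * g x + h x / t := by gcongr
  have hint : 2 * ∫ x, θ x ∂μ
      ≤ (t * Φ (weightedMean μ θ φ) + Ψ (weightedMean μ θ ψ) / t) * ∫ x, θ x ∂μ :=
    calc 2 * ∫ x, θ x ∂μ = ∫ x, 2 * θ x ∂μ := (integral_const_mul _ _).symm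
      _ ≤ ∫ x, (t * g x + h x / t) ∂μ :=
          integral_mono_ae (hθi.const_mul 2) ((hgi.const_mul t).add (hhi.div_const t)) hpointwise
      _ = (t * Φ (weightedMean μ θ φ) + Ψ (weightedMean μ θ ψ) / t) * ∫ x, θ x ∂μ := by
          rw [integral_add (hgi.const_mul t) (hhi.div_const t), integral_const_mul, integral_div,
            hg, hh]
          ring
  exact le_of_mul_le_mul_right hint hθpos

end WeightedMean

theorem generalised_holder_inequality_general
    (μ : Measure ℝ) (hsupp : μ (Iic 0) = 0)
    (φ ψ θ : ℝ → ℝ)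
    (hφp : ∀ x ∈ Ioi (0:ℝ), 0 < φ x)
    (hψp : ∀ x ∈ Ioi (0:ℝ), 0 < ψ x)
    (hθp : ∀ x ∈ Ioi (0:ℝ), 0 < θ x)
    (hθi : Integrable θ μ)
    (hφθi : Integrable (fun x => φ x * θ x) μ)
    (hψθi : Integrable (fun x => ψ x * θ x) μ)
    (hθpos : 0 < ∫ x, θ x ∂μ)
    (Φ Ψ : ℝ → ℝ)
    (hΦc : ConcaveOn ℝ (Ioi 0) Φ) (hΨc : ConcaveOn ℝ (Ioi 0) Ψ)
    (hΦp : ∀ x ∈ Ioi (0:ℝ), 0 < Φ x) (hΨp : ∀ x ∈ Ioi (0:ℝ), 0 < Ψ x)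
    (hae : ∀ᵐ l ∂μ, l ∈ Ioi (0:ℝ) → 1 ≤ Φ (φ l) * Ψ (ψ l)) :
    1 ≤ Φ ((∫ x, φ x * θ x ∂μ) / ∫ x, θ x ∂μ) *
        Ψ ((∫ x, ψ x * θ x ∂μ) / ∫ x, θ x ∂μ) := by
  have hpos : ∀ᵐ x ∂μ, x ∈ Ioi (0:ℝ) := (mem_ae_iff (s := Ioi (0:ℝ))).2 (by rwa [compl_Ioi])
  have hφ : ∀ᵐ x ∂μ, φ x ∈ Ioi 0 := hpos.mono hφp
  have hψ : ∀ᵐ x ∂μ, ψ x ∈ Ioi 0 := hpos.mono hψp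
  have hθ : ∀ᵐ x ∂μ, 0 < θ x := hpos.mono hθp
  have hmφ := weightedMean_pos hφ hθ hφθi hθpos
  have hmψ := weightedMean_pos hψ hθ hψθi hθpos
  refine one_le_mul_of_forall_two_le_mul_add_div (hΦp _ hmφ) (hΨp _ hmψ) fun t ht => ?_
  exact hΦc.two_le_mul_add_div_weightedMean hΨc hφ hψ (hθ.mono fun _ h => h.le) hθi hφθi hψθi
    hθpos (by rwa [interior_Ioi]) (by rwa [interior_Ioi]) (hφ.mono fun _ h => hΦp _ h)
    (hpos.mp hae) ht

/-- **Generalised Hölder inequality for variable Hilbert scales** (Theorem 1).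
`μ` is a nonzero finite positive Borel measure on `(0,∞)` (modelled as a finite
measure on `ℝ` vanishing outside `Ioi 0`); `φ, ψ, θ` are index functions
(measurable and positive on `(0,∞)`); `Φ, Ψ` are concave positive functions on
`(0,∞)` with `1 ≤ Φ(φ λ) * Ψ(ψ λ)` μ-a.e.  Then
`1 ≤ Φ((∫ φθ dμ)/(∫ θ dμ)) * Ψ((∫ ψθ dμ)/(∫ θ dμ))`. -/
theorem generalised_holder_inequality
    (μ : Measure ℝ) [IsFiniteMeasure μ] (hμ : μ ≠ 0) (hsupp : μ (Iic 0) = 0)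
    (φ ψ θ : ℝ → ℝ)
    (hφm : Measurable φ) (hψm : Measurable ψ) (hθm : Measurable θ)
    (hφp : ∀ x ∈ Ioi (0:ℝ), 0 < φ x)
    (hψp : ∀ x ∈ Ioi (0:ℝ), 0 < ψ x)
    (hθp : ∀ x ∈ Ioi (0:ℝ), 0 < θ x)
    (hθi : Integrable θ μ)
    (hφθi : Integrable (fun x => φ x * θ x) μ)
    (hψθi : Integrable (fun x => ψ x * θ x) μ)
    (hθpos : 0 < ∫ x, θ x ∂μ)
    (Φ Ψ : ℝ → ℝ)
    (hΦc : ConcaveOn ℝ (Ioi 0) Φ) (hΨc : ConcaveOn ℝ (Ioi 0) Ψ)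
    (hΦp : ∀ x ∈ Ioi (0:ℝ), 0 < Φ x) (hΨp : ∀ x ∈ Ioi (0:ℝ), 0 < Ψ x)
    (hae : ∀ᵐ l ∂μ, l ∈ Ioi (0:ℝ) → 1 ≤ Φ (φ l) * Ψ (ψ l)) :
    1 ≤ Φ ((∫ x, φ x * θ x ∂μ) / ∫ x, θ x ∂μ) *
        Ψ ((∫ x, ψ x * θ x ∂μ) / ∫ x, θ x ∂μ) :=
  generalised_holder_inequality_general μ hsupp φ ψ θ hφp hψp hθp hθi hφθi hψθi hθpos Φ Ψ hΦc hΨc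
    hΦp hΨp hae
end

section
/- Let α : (0,∞) → (0,∞) be a locally integrable function satisfying the scaling relation α(σλ) ≤ α(λ)/σ for all σ ∈ (0,1] and all λ > 0, let c > 0, and define a : [0,∞) → [1,∞) by a(λ) = 1 + c·∫₀^λ exp(∫₁^t α(s) ds) dt, assuming t ↦ exp(∫₁^t α(s) ds) is integrable on every interval [0,λ]. Then a is a continuous strictly increasing function with a(0) = 1, and for every nonzero finite positive Borel measure μ on (0,∞) with λ ↦ a(λ) μ-integrable and every σ ∈ [0,1]: ∫a(σλ) dμ(λ) ≤ μ((0,∞)) · a( σ · a⁻¹( (∫a(λ) dμ(λ))/μ((0,∞)) ) ), where a⁻¹ denotes the inverse function of a. -/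
/-!
Write `g t = exp (∫₁ᵗ α)`, so that `a' = c g`. The scaling hypothesis `σ α (σ u) ≤ α u` makes
`ρ s = g (σ s) / g s = exp (∫ₛ^{σ s} α)` antitone in `s`. Comparing `g (σ ·)` with
`ρ w · g` on either side of `w` gives the supporting-line inequality
`a (σ l) ≤ a (σ w) + σ ρ w (a l - a w)`, i.e. the graph of `a (σ a⁻¹ ·)` lies below a line
through the point above `a w`. Choosing `a w` to be the `μ`-mean of `a` (possible by the
intermediate value theorem) and integrating is Jensen's inequality for this concave function.
-/

open MeasureTheory Set intervalIntegral

lemma MeasureTheory.LocallyIntegrableOn.intervalIntegrable_of_mem_Ioi {f : ℝ → ℝ} {b x y : ℝ}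
    (hf : LocallyIntegrableOn f (Ioi b)) (hx : b < x) (hy : b < y) :
    IntervalIntegrable f volume x y :=
  (hf.integrableOn_compact_subset (fun _ ht => (lt_min hx hy).trans_le ht.1)
    isCompact_uIcc).intervalIntegrable

lemma IntervalIntegrable.comp_mul_left_of_ne_zero {f : ℝ → ℝ} {c x y : ℝ}
    (hf : IntervalIntegrable f volume (c * x) (c * y)) (hc : c ≠ 0) :
    IntervalIntegrable (fun u => f (c * u)) volume x y := by
  simpa only [mul_div_cancel_left₀ _ hc] using hf.comp_mul_left (c := c)

lemma continuousOn_primitive_Ici {g : ℝ → ℝ}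
    (hg : ∀ l : ℝ, 0 ≤ l → IntervalIntegrable g volume 0 l) :
    ContinuousOn (fun l => ∫ t in (0:ℝ)..l, g t) (Ici 0) := by
  intro x hx
  have hx1 : (0:ℝ) ≤ x + 1 := by linarith [mem_Ici.1 hx]
  have h := continuousOn_primitive_interval' (hg _ hx1) left_mem_uIcc
  rw [uIcc_of_le hx1] at h
  refine (h x ⟨hx, by linarith⟩).mono_of_mem_nhdsWithin ?_
  exact Filter.mem_of_superset (inter_mem_nhdsWithin _ (Iio_mem_nhds (lt_add_one x)))
    fun t ht => ⟨ht.1, ht.2.le⟩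

lemma integral_antitoneOn_mul_le {ρ g : ℝ → ℝ} {w l : ℝ} (hρ : AntitoneOn ρ (uIcc w l))
    (hg : ∀ s ∈ uIcc w l, 0 ≤ g s) (hρg : IntervalIntegrable (fun s => ρ s * g s) volume w l)
    (hgi : IntervalIntegrable g volume w l) :
    ∫ s in w..l, ρ s * g s ≤ ρ w * ∫ s in w..l, g s := by
  rw [← intervalIntegral.integral_const_mul]
  rcases le_total w l with hwl | hlw
  · refine integral_mono_on hwl hρg (hgi.const_mul _) fun s hs => ?_
    have hs' : s ∈ uIcc w l := by rwa [uIcc_of_le hwl]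
    exact mul_le_mul_of_nonneg_right (hρ left_mem_uIcc hs' hs.1) (hg s hs')
  · rw [integral_symm l w, integral_symm l w, neg_le_neg_iff]
    refine integral_mono_on hlw (hgi.symm.const_mul _) hρg.symm fun s hs => ?_
    have hs' : s ∈ uIcc w l := by rwa [uIcc_of_ge hlw]
    exact mul_le_mul_of_nonneg_right (hρ hs' left_mem_uIcc hs.2) (hg s hs')

section Dilation

variable {α g ρ a : ℝ → ℝ} {c σ : ℝ}

lemma integral_dilate_le (hα : LocallyIntegrableOn α (Ioi 0)) (hσ : 0 < σ)
    (hscale : ∀ l > (0:ℝ), α (σ * l) ≤ α l / σ) {s₁ s₂ : ℝ} (hs₁ : 0 < s₁) (h : s₁ ≤ s₂) :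
    ∫ u in σ * s₁..σ * s₂, α u ≤ ∫ u in s₁..s₂, α u := by
  have hs₂ := hs₁.trans_le h
  have hασ : IntervalIntegrable (fun u => α (σ * u)) volume s₁ s₂ :=
    (hα.intervalIntegrable_of_mem_Ioi (mul_pos hσ hs₁) (mul_pos hσ hs₂)).comp_mul_left_of_ne_zero
      hσ.ne'
  calc ∫ u in σ * s₁..σ * s₂, α u = σ * ∫ u in s₁..s₂, α (σ * u) :=
        (smul_integral_comp_mul_left _ σ).symm
    _ = ∫ u in s₁..s₂, σ * α (σ * u) := (intervalIntegral.integral_const_mul _ _).symm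
    _ ≤ ∫ u in s₁..s₂, α u := by
        refine integral_mono_on h (hασ.const_mul σ)
          (hα.intervalIntegrable_of_mem_Ioi hs₁ hs₂) fun u hu => ?_
        have := hscale u (hs₁.trans_le hu.1)
        rwa [le_div_iff₀ hσ, mul_comm] at this

lemma antitoneOn_integral_dilate (hα : LocallyIntegrableOn α (Ioi 0)) (hσ : 0 < σ)
    (hscale : ∀ l > (0:ℝ), α (σ * l) ≤ α l / σ) :
    AntitoneOn (fun s => ∫ u in s..σ * s, α u) (Ioi 0) := by
  intro s₁ (hs₁ : 0 < s₁) s₂ (hs₂ : 0 < s₂) h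
  have hi := fun {x y : ℝ} (hx : 0 < x) (hy : 0 < y) => hα.intervalIntegrable_of_mem_Ioi hx hy
  have hσs₁ := mul_pos hσ hs₁
  have hσs₂ := mul_pos hσ hs₂
  have hsplit : ∫ u in s₂..σ * s₂, α u = (∫ u in s₂..s₁, α u) + (∫ u in s₁..σ * s₁, α u) +
      ∫ u in σ * s₁..σ * s₂, α u := by
    rw [integral_add_adjacent_intervals (hi hs₂ hs₁) (hi hs₁ hσs₁),
      integral_add_adjacent_intervals (hi hs₂ hσs₁) (hi hσs₁ hσs₂)]
  have := integral_dilate_le hα hσ hscale hs₁ h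
  rw [integral_symm s₁ s₂] at hsplit
  dsimp only
  linarith

lemma exp_integral_dilate (hα : LocallyIntegrableOn α (Ioi 0)) (hσ : 0 < σ) {s : ℝ}
    (hs : 0 < s) :
    Real.exp (∫ u in (1:ℝ)..σ * s, α u) =
      Real.exp (∫ u in s..σ * s, α u) * Real.exp (∫ u in (1:ℝ)..s, α u) := by
  rw [← Real.exp_add, add_comm, integral_add_adjacent_intervals
    (hα.intervalIntegrable_of_mem_Ioi one_pos hs)
    (hα.intervalIntegrable_of_mem_Ioi hs (mul_pos hσ hs))]

lemma integral_dilate_le_of_antitoneOn (hg : ∀ t > (0:ℝ), 0 ≤ g t)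
    (hgi : ∀ l : ℝ, 0 ≤ l → IntervalIntegrable g volume 0 l) (hσ : 0 < σ)
    (hρ : AntitoneOn ρ (Ioi 0)) (hdil : ∀ s > (0:ℝ), g (σ * s) = ρ s * g s) {w l : ℝ}
    (hw : 0 < w) (hl : 0 < l) :
    ∫ t in σ * w..σ * l, g t ≤ σ * ρ w * ∫ t in w..l, g t := by
  have hpos : ∀ s ∈ uIcc w l, 0 < s := fun s hs => (lt_min hw hl).trans_le hs.1
  have hgi' : IntervalIntegrable g volume w l := (hgi w hw.le).symm.trans (hgi l hl.le)
  have heq : EqOn (fun s => g (σ * s)) (fun s => ρ s * g s) (uIcc w l) :=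
    fun s hs => hdil s (hpos s hs)
  have hgσ : IntervalIntegrable (fun s => g (σ * s)) volume w l :=
    ((hgi _ (mul_pos hσ hw).le).symm.trans (hgi _ (mul_pos hσ hl).le)).comp_mul_left_of_ne_zero
      hσ.ne'
  calc ∫ t in σ * w..σ * l, g t = σ * ∫ s in w..l, g (σ * s) :=
        (smul_integral_comp_mul_left _ σ).symm
    _ = σ * ∫ s in w..l, ρ s * g s := by rw [integral_congr heq]
    _ ≤ σ * (ρ w * ∫ s in w..l, g s) :=
        mul_le_mul_of_nonneg_left (integral_antitoneOn_mul_le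
          (hρ.mono fun s hs => hpos s hs) (fun s hs => hg s (hpos s hs))
          (hgσ.congr (heq.mono uIoc_subset_uIcc)) hgi') hσ.le
    _ = σ * ρ w * ∫ s in w..l, g s := by ring

variable (hgi : ∀ l : ℝ, 0 ≤ l → IntervalIntegrable g volume 0 l)
  (ha : ∀ l : ℝ, 0 ≤ l → a l = 1 + c * ∫ t in (0:ℝ)..l, g t)
include hgi ha

lemma sub_eq_mul_integral {x y : ℝ} (hx : 0 ≤ x) (hy : 0 ≤ y) :
    a y - a x = c * ∫ t in x..y, g t := by
  rw [ha y hy, ha x hx, ← integral_interval_sub_left (hgi y hy) (hgi x hx)]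
  ring

lemma strictMonoOn_of_eq_add_integral (hc : 0 < c) (hg : ∀ t > (0:ℝ), 0 < g t) :
    StrictMonoOn a (Ici 0) := by
  intro x hx y hy hxy
  have := intervalIntegral_pos_of_pos_on ((hgi x hx).symm.trans (hgi y hy))
    (fun t ht => hg t ((mem_Ici.1 hx).trans_lt ht.1)) hxy
  have := sub_eq_mul_integral hgi ha hx hy
  nlinarith

lemma continuousOn_of_eq_add_integral : ContinuousOn a (Ici 0) :=
  (continuousOn_const.add (continuousOn_const.mul (continuousOn_primitive_Ici hgi))).congr
    fun l hl => ha l hl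

lemma apply_mul_le_of_antitoneOn (hc : 0 ≤ c) (hg : ∀ t > (0:ℝ), 0 ≤ g t) (hσ : 0 < σ)
    (hρ : AntitoneOn ρ (Ioi 0)) (hdil : ∀ s > (0:ℝ), g (σ * s) = ρ s * g s) {w l : ℝ}
    (hw : 0 < w) (hl : 0 < l) :
    a (σ * l) ≤ a (σ * w) + σ * ρ w * (a l - a w) := by
  rw [sub_eq_mul_integral hgi ha hw.le hl.le, ← sub_le_iff_le_add',
    sub_eq_mul_integral hgi ha (mul_pos hσ hw).le (mul_pos hσ hl).le]
  calc c * ∫ t in σ * w..σ * l, g t ≤ c * (σ * ρ w * ∫ t in w..l, g t) :=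
        mul_le_mul_of_nonneg_left
          (integral_dilate_le_of_antitoneOn hg hgi hσ hρ hdil hw hl) hc
    _ = σ * ρ w * (c * ∫ t in w..l, g t) := by ring

end Dilation

section Jensen

variable {X : Type*} [MeasurableSpace X] {μ : Measure X}

lemma average_mem_image_of_isPreconnected [TopologicalSpace X] [IsFiniteMeasure μ]
    (hμ : μ ≠ 0) {s : Set X} (hs : IsPreconnected s) (hsμ : μ sᶜ = 0) {f : X → ℝ}
    (hf : ContinuousOn f s) (hfi : Integrable f μ) : ⨍ x, f x ∂μ ∈ f '' s := by
  obtain ⟨x, hx, hfx⟩ := exists_notMem_null_le_average hμ hfi hsμ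
  obtain ⟨y, hy, hfy⟩ := exists_notMem_null_average_le hμ hfi hsμ
  exact hs.intermediate_value (notMem_compl_iff.1 hx) (notMem_compl_iff.1 hy) hf ⟨hfx, hfy⟩

lemma integral_le_of_ae_le_affine [IsFiniteMeasure μ] {f g : X → ℝ} (hf : Integrable f μ)
    (hg : 0 ≤ᵐ[μ] g) {b k : ℝ} (h : ∀ᵐ x ∂μ, g x ≤ b + k * (f x - ⨍ y, f y ∂μ)) :
    ∫ x, g x ∂μ ≤ μ.real univ * b := by
  have hcentred : ∫ x, (f x - ⨍ y, f y ∂μ) ∂μ = 0 := by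
    rw [integral_sub hf (integrable_const _), MeasureTheory.integral_const, measure_smul_average,
      sub_self]
  have hint : Integrable (fun x => k * (f x - ⨍ y, f y ∂μ)) μ :=
    (hf.sub (integrable_const _)).const_mul k
  calc ∫ x, g x ∂μ ≤ ∫ x, (b + k * (f x - ⨍ y, f y ∂μ)) ∂μ :=
        integral_mono_of_nonneg hg ((integrable_const b).add hint) h
    _ = μ.real univ * b := by
        rw [integral_add (integrable_const b) hint, MeasureTheory.integral_const,
          MeasureTheory.integral_const_mul, hcentred, mul_zero, add_zero, smul_eq_mul]

end Jensen

theorem dilational_interpolation_inequality_general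
    (α : ℝ → ℝ)
    (hα_loc : LocallyIntegrableOn α (Ioi 0))
    (hα_scale : ∀ σ ∈ Ioc (0:ℝ) 1, ∀ l > (0:ℝ), α (σ * l) ≤ α l / σ)
    (c : ℝ) (hc : 0 < c)
    (hint : ∀ l : ℝ, 0 ≤ l →
      IntervalIntegrable (fun t => Real.exp (∫ s in (1:ℝ)..t, α s)) volume 0 l)
    (a : ℝ → ℝ)
    (ha : ∀ l : ℝ, 0 ≤ l →
      a l = 1 + c * ∫ t in (0:ℝ)..l, Real.exp (∫ s in (1:ℝ)..t, α s)) :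
    ContinuousOn a (Ici 0) ∧ StrictMonoOn a (Ici 0) ∧ a 0 = 1 ∧
      ∀ μ : Measure ℝ, IsFiniteMeasure μ → μ ≠ 0 → μ (Iic 0) = 0 →
        Integrable a μ →
        ∀ ainv : ℝ → ℝ, InvOn ainv a (Ici 0) (a '' Ici 0) →
          ∀ σ ∈ Icc (0:ℝ) 1,
            ∫ l, a (σ * l) ∂μ ≤
              (μ (Ioi 0)).toReal *
                a (σ * ainv ((∫ l, a l ∂μ) / (μ (Ioi 0)).toReal)) := by
  have hmono := strictMonoOn_of_eq_add_integral hint ha hc fun t _ => Real.exp_pos _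
  have hcont := continuousOn_of_eq_add_integral hint ha
  have ha0 : a 0 = 1 := by simp [ha 0 le_rfl]
  refine ⟨hcont, hmono, ha0, fun μ _ hμ hμ0 ha_int ainv hinv σ hσ => ?_⟩
  have hμc : μ (Ioi 0)ᶜ = 0 := by rwa [compl_Ioi]
  have hM : (μ (Ioi 0)).toReal = μ.real univ := measureReal_congr (ae_eq_univ.2 hμc)
  obtain ⟨w, hw, hw_avg⟩ := average_mem_image_of_isPreconnected hμ isPreconnected_Ioi hμc
    (hcont.mono Ioi_subset_Ici_self) ha_int
  have hmean : (∫ l, a l ∂μ) / (μ (Ioi 0)).toReal = a w := by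
    rw [hw_avg, average_eq, hM, smul_eq_mul, div_eq_inv_mul]
  rw [hmean, hinv.1 (Ioi_subset_Ici_self hw), hM]
  have htangent : ∀ l > (0:ℝ),
      a (σ * l) ≤ a (σ * w) + σ * Real.exp (∫ u in w..σ * w, α u) * (a l - a w) := by
    rcases hσ.1.eq_or_lt with rfl | hσ0
    · simp
    have hscale := hα_scale σ ⟨hσ0, hσ.2⟩
    exact fun l hl => apply_mul_le_of_antitoneOn hint ha hc.le (fun t _ => (Real.exp_pos _).le)
      hσ0 (Real.exp_monotone.comp_antitoneOn (antitoneOn_integral_dilate hα_loc hσ0 hscale))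
      (fun s hs => exp_integral_dilate hα_loc hσ0 hs) hw hl
  have hae : ∀ᵐ l ∂μ, l ∈ Ioi (0:ℝ) := mem_ae_iff.2 hμc
  refine integral_le_of_ae_le_affine (k := σ * Real.exp (∫ u in w..σ * w, α u)) ha_int ?_ ?_
  · filter_upwards [hae] with l hl
    have hσl := mul_nonneg hσ.1 hl.le
    exact zero_le_one.trans (ha0 ▸ hmono.monotoneOn (mem_Ici.2 le_rfl) hσl hσl)
  · filter_upwards [hae] with l hl
    exact hw_avg ▸ htangent l hl

/-- **Dilational interpolation inequality** (Theorem 2).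
Let `α : (0,∞) → (0,∞)` be locally integrable with `α(σλ) ≤ α(λ)/σ` for
`σ ∈ (0,1]`, `c > 0`, and let `a(λ) = 1 + c ∫₀^λ exp(∫₁^t α(s) ds) dt` (the
integrand being integrable on every `[0,λ]`).  Then `a` is continuous and
strictly increasing on `[0,∞)` with `a 0 = 1`, and for every nonzero finite
positive Borel measure `μ` on `(0,∞)` with `a` μ-integrable, every
(two-sided) inverse `ainv` of `a` and every `σ ∈ [0,1]`,
`∫ a(σλ) dμ(λ) ≤ μ((0,∞)) * a(σ * a⁻¹((∫ a dμ)/μ((0,∞))))`. -/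
theorem dilational_interpolation_inequality
    (α : ℝ → ℝ)
    (hα_loc : LocallyIntegrableOn α (Ioi 0))
    (hα_pos : ∀ x ∈ Ioi (0:ℝ), 0 < α x)
    (hα_scale : ∀ σ ∈ Ioc (0:ℝ) 1, ∀ l > (0:ℝ), α (σ * l) ≤ α l / σ)
    (c : ℝ) (hc : 0 < c)
    (hint : ∀ l : ℝ, 0 ≤ l →
      IntervalIntegrable (fun t => Real.exp (∫ s in (1:ℝ)..t, α s)) volume 0 l)
    (a : ℝ → ℝ)
    (ha : ∀ l : ℝ, 0 ≤ l →
      a l = 1 + c * ∫ t in (0:ℝ)..l, Real.exp (∫ s in (1:ℝ)..t, α s)) :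
    ContinuousOn a (Ici 0) ∧ StrictMonoOn a (Ici 0) ∧ a 0 = 1 ∧
      ∀ μ : Measure ℝ, IsFiniteMeasure μ → μ ≠ 0 → μ (Iic 0) = 0 →
        Integrable a μ →
        ∀ ainv : ℝ → ℝ, InvOn ainv a (Ici 0) (a '' Ici 0) →
          ∀ σ ∈ Icc (0:ℝ) 1,
            ∫ l, a (σ * l) ∂μ ≤
              (μ (Ioi 0)).toReal *
                a (σ * ainv ((∫ l, a l ∂μ) / (μ (Ioi 0)).toReal)) :=
  dilational_interpolation_inequality_general α hα_loc hα_scale c hc hint a ha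
end

section
/- Let h : (0,∞) → (0,∞) be concave and nondecreasing, let C > 0 and ε > 0, and let r ∈ (0, 2ε] and x ≥ 0 satisfy x² ≤ r²·h(C²/r²). Then x ≤ 2ε·√(h(C²·ε⁻²)). -/
/-!
Concavity and nonnegativity of `h` on `(0,∞)` make the slope `h(t)/t` from the origin
nonincreasing; equivalently, the perspective `s ↦ s h(c/s)` is nondecreasing. Hence `x² ≤ r² h(C²/r²) ≤ (2ε)² h(C²/(2ε)²) ≤ (2ε)² h(C²/ε²)`,
the last step by monotonicity of `h`.
-/

open Set Filter Topology

namespace ConcaveOn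

variable {h : ℝ → ℝ}

theorem antitoneOn_div_self (hconc : ConcaveOn ℝ (Ioi 0) h)
    (hnonneg : ∀ x ∈ Ioi (0 : ℝ), 0 ≤ h x) : AntitoneOn (fun x => h x / x) (Ioi 0) := by
  intro a ha b hb hab
  rcases hab.eq_or_lt with rfl | hab
  · rfl
  have ha : 0 < a := ha
  have hb : 0 < b := hb
  -- Compare with the chord through `(c, h c)` and let `c ↓ 0`, using `h c ≥ 0`.
  have slope_le : ∀ c ∈ Ioo 0 a, (h b - h a) / (b - a) ≤ h a / (a - c) := fun c hc =>
    (hconc.slope_anti_adjacent hc.1 hb hc.2 hab).trans <|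
      div_le_div_of_nonneg_right (by linarith [hnonneg c hc.1]) (by linarith [hc.2])
  have hlim : Tendsto (fun c => h a / (a - c)) (𝓝[>] 0) (𝓝 (h a / a)) := by
    have hcont : ContinuousAt (fun c => h a / (a - c)) 0 := by
      fun_prop (disch := simpa using ha.ne')
    simpa using tendsto_nhdsWithin_of_tendsto_nhds hcont.tendsto
  have hslope : (h b - h a) / (b - a) ≤ h a / a :=
    ge_of_tendsto hlim (eventually_of_mem (Ioo_mem_nhdsGT ha) slope_le)
  rw [div_le_div_iff₀ (by linarith) ha] at hslope
  rw [div_le_div_iff₀ hb ha]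
  linarith

theorem monotoneOn_mul_comp_div (hconc : ConcaveOn ℝ (Ioi 0) h)
    (hnonneg : ∀ x ∈ Ioi (0 : ℝ), 0 ≤ h x) {c : ℝ} (hc : 0 < c) :
    MonotoneOn (fun s => s * h (c / s)) (Ioi 0) := by
  intro s (hs : 0 < s) t (ht : 0 < t) hst
  have key := hconc.antitoneOn_div_self hnonneg (div_pos hc ht) (div_pos hc hs)
    (div_le_div_of_nonneg_left hc.le hs hst)
  calc s * h (c / s) = c * (h (c / s) / (c / s)) := by field_simp
    _ ≤ c * (h (c / t) / (c / t)) := mul_le_mul_of_nonneg_left key hc.le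
    _ = t * h (c / t) := by field_simp

end ConcaveOn

theorem error_bound_discrepancy_general
    (h : ℝ → ℝ)
    (hconc : ConcaveOn ℝ (Ioi 0) h)
    (hmono : MonotoneOn h (Ioi 0))
    (hpos : ∀ x ∈ Ioi (0:ℝ), 0 < h x)
    (C ε r x : ℝ) (hC : 0 < C)
    (hr : r ∈ Ioc (0:ℝ) (2 * ε))
    (hineq : x ^ 2 ≤ r ^ 2 * h (C ^ 2 / r ^ 2)) :
    x ≤ 2 * ε * Real.sqrt (h (C ^ 2 / ε ^ 2)) := by
  obtain ⟨hr0, hr2⟩ := hr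
  have hε : 0 < ε := by linarith
  have hperspective : r ^ 2 * h (C ^ 2 / r ^ 2) ≤ (2 * ε) ^ 2 * h (C ^ 2 / (2 * ε) ^ 2) :=
    hconc.monotoneOn_mul_comp_div (fun y hy => (hpos y hy).le) (pow_pos hC 2)
      (pow_pos hr0 2) (by positivity : (0 : ℝ) < (2 * ε) ^ 2) (pow_le_pow_left₀ hr0.le hr2 2)
  have hshift : h (C ^ 2 / (2 * ε) ^ 2) ≤ h (C ^ 2 / ε ^ 2) :=
    hmono (by positivity : (0 : ℝ) < C ^ 2 / (2 * ε) ^ 2) (by positivity : (0 : ℝ) < C ^ 2 / ε ^ 2)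
      (div_le_div_of_nonneg_left (by positivity) (by positivity) (by nlinarith))
  have hx2 : x ^ 2 ≤ (2 * ε) ^ 2 * h (C ^ 2 / ε ^ 2) :=
    hineq.trans (hperspective.trans (mul_le_mul_of_nonneg_left hshift (by positivity)))
  calc x ≤ |x| := le_abs_self x
    _ ≤ √((2 * ε) ^ 2 * h (C ^ 2 / ε ^ 2)) := Real.abs_le_sqrt hx2
    _ = 2 * ε * √(h (C ^ 2 / ε ^ 2)) := by
      rw [Real.sqrt_mul (by positivity), Real.sqrt_sq (by positivity)]

/-- **General error bound under the discrepancy ansatz** (equation (8)):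
if `h` is concave, nondecreasing and positive on `(0,∞)`, `C, ε > 0`,
`r ∈ (0, 2ε]`, `x ≥ 0` and `x² ≤ r² h(C²/r²)`, then `x ≤ 2ε √(h(C²ε⁻²))`. -/
theorem error_bound_discrepancy
    (h : ℝ → ℝ)
    (hconc : ConcaveOn ℝ (Ioi 0) h)
    (hmono : MonotoneOn h (Ioi 0))
    (hpos : ∀ x ∈ Ioi (0:ℝ), 0 < h x)
    (C ε r x : ℝ) (hC : 0 < C) (hε : 0 < ε)
    (hr : r ∈ Ioc (0:ℝ) (2 * ε)) (hx : 0 ≤ x)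
    (hineq : x ^ 2 ≤ r ^ 2 * h (C ^ 2 / r ^ 2)) :
    x ≤ 2 * ε * Real.sqrt (h (C ^ 2 / ε ^ 2)) :=
  error_bound_discrepancy_general h hconc hmono hpos C ε r x hC hr hineq
end

section
/- Let C > 0 and ε > 0 with 2ε ≤ C·e^{−1/2}, and let r ∈ (0, 2ε] and x ≥ 0 satisfy x² ≤ r²·log(C²/r²). Then x ≤ 2·√(2·log(C/ε))·ε. -/
open Set Real

/-! Since `log (C² / r²) = 2 log (C / r)`, it suffices to bound `r² log (C / r)`. This function is
nondecreasing as long as `log (C / r) ≥ 1 / 2`, i.e. `r ≤ C e^(-1/2)`, so its value at `r ≤ 2ε` is at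
most its value `4ε² log (C / (2ε)) ≤ 4ε² log (C / ε)` at `2ε`. -/

lemma half_le_log_div_of_le_mul_exp {C s : ℝ} (hs : 0 < s) (hsC : s ≤ C * exp (-(1 / 2))) :
    1 / 2 ≤ log (C / s) := by
  have hC : 0 < C := (mul_pos_iff_of_pos_right (exp_pos _)).1 (hs.trans_le hsC)
  rw [le_log_iff_exp_le (by positivity), le_div_iff₀ hs]
  calc exp (1 / 2) * s ≤ exp (1 / 2) * (C * exp (-(1 / 2))) := by gcongr
    _ = C := by rw [mul_left_comm, ← exp_add]; norm_num

-- The elementary substitute for `d/dr (r² log (C / r)) = r (2 log (C / r) - 1) ≥ 0` is `log t ≤ t - 1`.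
lemma sq_mul_log_div_le_of_le {C r s : ℝ} (hr : 0 < r) (hrs : r ≤ s) (hs : 1 / 2 ≤ log (C / s)) :
    r ^ 2 * log (C / r) ≤ s ^ 2 * log (C / s) := by
  have hs0 : 0 < s := hr.trans_le hrs
  have hC : C ≠ 0 := by
    rintro rfl
    norm_num at hs
  have hsplit : log (C / r) = log (C / s) + log (s / r) := by
    rw [← log_mul (div_ne_zero hC (by positivity)) (by positivity),
      div_mul_div_cancel₀ (by positivity)]
  have hlog : r ^ 2 * log (s / r) ≤ r * (s - r) :=
    calc r ^ 2 * log (s / r) ≤ r ^ 2 * (s / r - 1) := by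
          gcongr
          exact log_le_sub_one_of_pos (by positivity)
      _ = r * (s - r) := by field_simp
  have hgap : r * (s - r) ≤ (s ^ 2 - r ^ 2) * log (C / s) := by
    have : r ≤ (s + r) * log (C / s) := by nlinarith
    linarith [mul_le_mul_of_nonneg_left this (sub_nonneg.2 hrs)]
  calc r ^ 2 * log (C / r) = r ^ 2 * log (C / s) + r ^ 2 * log (s / r) := by rw [hsplit]; ring
    _ ≤ r ^ 2 * log (C / s) + (s ^ 2 - r ^ 2) * log (C / s) := by linarith
    _ = s ^ 2 * log (C / s) := by ring

lemma monotoneOn_sq_mul_log_div (C : ℝ) :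
    MonotoneOn (fun r ↦ r ^ 2 * log (C / r)) (Ioc 0 (C * exp (-(1 / 2)))) :=
  fun _ hr _ hs hrs ↦ sq_mul_log_div_le_of_le hr.1 hrs (half_le_log_div_of_le_mul_exp hs.1 hs.2)

/-- **Error bound for the exponential source condition** (equation (9)):
if `C, ε > 0` with `2ε ≤ C e^(-1/2)`, `r ∈ (0, 2ε]`, `x ≥ 0` and
`x² ≤ r² log(C²/r²)`, then `x ≤ 2 √(2 log(C/ε)) ε`. -/
theorem error_bound_log
    (C ε r x : ℝ) (hC : 0 < C) (hε : 0 < ε)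
    (hεsmall : 2 * ε ≤ C * Real.exp (-(1 / 2)))
    (hr : r ∈ Ioc (0:ℝ) (2 * ε)) (hx : 0 ≤ x)
    (hineq : x ^ 2 ≤ r ^ 2 * Real.log (C ^ 2 / r ^ 2)) :
    x ≤ 2 * Real.sqrt (2 * Real.log (C / ε)) * ε := by
  obtain ⟨hr0, hr2ε⟩ := hr
  have h2ε : 2 * ε ∈ Ioc 0 (C * exp (-(1 / 2))) := ⟨by positivity, hεsmall⟩
  have hlog_le : log (C / (2 * ε)) ≤ log (C / ε) :=
    log_le_log (by positivity) (div_le_div_of_nonneg_left hC.le hε (by linarith))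
  have hL : 0 ≤ log (C / ε) := by linarith [half_le_log_div_of_le_mul_exp h2ε.1 h2ε.2]
  have hsq : x ^ 2 ≤ (2 * √(2 * log (C / ε)) * ε) ^ 2 :=
    calc x ^ 2 ≤ 2 * (r ^ 2 * log (C / r)) := by
          rw [← div_pow, log_pow] at hineq
          linarith
      _ ≤ 2 * ((2 * ε) ^ 2 * log (C / (2 * ε))) := by
          gcongr 2 * ?_
          exact monotoneOn_sq_mul_log_div C ⟨hr0, hr2ε.trans hεsmall⟩ h2ε hr2ε
      _ ≤ 2 * ((2 * ε) ^ 2 * log (C / ε)) := by gcongr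
      _ = (2 * √(2 * log (C / ε)) * ε) ^ 2 := by
          simp only [mul_pow, sq_sqrt (by positivity : 0 ≤ 2 * log (C / ε))]
          ring
  exact (pow_le_pow_iff_left₀ hx (by positivity) two_ne_zero).1 hsq
end

section
/- Let R > 1 and C > 0. There exists ε₀ > 0 such that for every ε ∈ (0, ε₀] and every sequence (x_k)_{k≥1} of nonnegative reals satisfying ∑_{k≥1} x_k ≤ ε² and ∑_{k≥1} R^{2k} x_k ≤ C², one has √(∑_{k≥1} k² x_k) ≤ 2ε·log(C/ε)/log(R). -/
/-!
Put `K = log (C/ε) / log R`, so that `R^K = C/ε`. For `k ≤ K` trivially `k² ≤ K²`; for `k ≥ K`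
the tangent-line bound `s + 1 ≤ exp s` gives `k ≤ K R^(k-K)` as soon as `K log R ≥ 1`, which is
what `ε ≤ C/e` guarantees. Hence `k² ≤ K² + K² (ε/C)² R^(2k)` termwise, and summing against `x_k`
yields `∑ k² x_k ≤ K² ε² + K² (ε/C)² C² = 2 K² ε²`.
-/

open Real

theorem le_mul_exp_mul_sub {K L t : ℝ} (hK : 0 < K) (hKL : 1 ≤ K * L) (hKt : K ≤ t) :
    t ≤ K * exp (L * (t - K)) := by
  have hslope : (t - K) / K ≤ L * (t - K) := by
    rw [div_le_iff₀ hK]; nlinarith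
  calc t = K * ((t - K) / K + 1) := by field_simp; ring
    _ ≤ K * exp ((t - K) / K) := by gcongr; exact add_one_le_exp _
    _ ≤ K * exp (L * (t - K)) := by gcongr

theorem sq_le_sq_add_sq_mul_exp {K L t : ℝ} (hK : 0 < K) (hKL : 1 ≤ K * L) (ht : 0 ≤ t) :
    t ^ 2 ≤ K ^ 2 + K ^ 2 * exp (2 * L * (t - K)) := by
  rcases le_total t K with htK | hKt
  · nlinarith [exp_pos (2 * L * (t - K))]
  · have hsq : K ^ 2 * exp (2 * L * (t - K)) = (K * exp (L * (t - K))) ^ 2 := by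
      rw [mul_pow, ← exp_nat_mul]; push_cast; ring_nf
    nlinarith [le_mul_exp_mul_sub hK hKL hKt, sq_nonneg K]

theorem tsum_mul_le_of_le_add_mul {ι : Type*} {w v x : ι → ℝ} {a b : ℝ}
    (hx : ∀ i, 0 ≤ x i) (hw : ∀ i, 0 ≤ w i) (hle : ∀ i, w i ≤ a + b * v i)
    (hxs : Summable x) (hvx : Summable fun i => v i * x i) :
    ∑' i, w i * x i ≤ a * ∑' i, x i + b * ∑' i, v i * x i := by
  have hmaj : Summable fun i => a * x i + b * (v i * x i) :=
    (hxs.mul_left a).add (hvx.mul_left b)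
  have hpt : ∀ i, w i * x i ≤ a * x i + b * (v i * x i) := fun i => by
    nlinarith [mul_le_mul_of_nonneg_right (hle i) (hx i)]
  calc ∑' i, w i * x i ≤ ∑' i, (a * x i + b * (v i * x i)) :=
        (hmaj.of_nonneg_of_le (fun i => mul_nonneg (hw i) (hx i)) hpt).tsum_le_tsum hpt hmaj
    _ = a * ∑' i, x i + b * ∑' i, v i * x i := by
        rw [(hxs.mul_left a).tsum_add (hvx.mul_left b), tsum_mul_left, tsum_mul_left]

/-- **Error bound for the differentiation of analytic functions** (Section 3.1).
For `R > 1` and `C > 0` there is an `ε₀ > 0` such that for every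
`ε ∈ (0, ε₀]` and every sequence `(x_k)_{k ≥ 1}` of nonnegative reals with
`∑ x_k ≤ ε²` and `∑ R^{2k} x_k ≤ C²` (the latter series being summable),
`√(∑ k² x_k) ≤ 2 ε log(C/ε) / log R`.  (Sequences indexed by `k ≥ 1` are
modelled by `fun k : ℕ => x (k+1)`.) -/
theorem analytic_differentiation_error_bound
    (R C : ℝ) (hR : 1 < R) (hC : 0 < C) :
    ∃ ε₀ > (0:ℝ), ∀ ε : ℝ, 0 < ε → ε ≤ ε₀ →
      ∀ x : ℕ → ℝ, (∀ k, 0 ≤ x k) →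
        Summable (fun k : ℕ => R ^ (2 * (k + 1)) * x (k + 1)) →
        (∑' k : ℕ, x (k + 1)) ≤ ε ^ 2 →
        (∑' k : ℕ, R ^ (2 * (k + 1)) * x (k + 1)) ≤ C ^ 2 →
        Real.sqrt (∑' k : ℕ, ((k : ℝ) + 1) ^ 2 * x (k + 1)) ≤
          2 * ε * Real.log (C / ε) / Real.log R := by
  have hL : 0 < log R := log_pos hR
  refine ⟨C / exp 1, by positivity, fun ε hε hεle x hx hRx hx_le hRx_le => ?_⟩
  have hlog : 1 ≤ log (C / ε) := by
    rwa [le_log_iff_exp_le (by positivity), le_div_iff₀ hε, mul_comm, ← le_div_iff₀ (exp_pos 1)]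
  set K := log (C / ε) / log R
  have hK : 0 < K := by positivity
  have hKL : K * log R = log (C / ε) := div_mul_cancel₀ _ hL.ne'
  have hpt : ∀ k : ℕ, ((k : ℝ) + 1) ^ 2 ≤ K ^ 2 + (K * ε / C) ^ 2 * R ^ (2 * (k + 1)) := by
    intro k
    have hpow : R ^ (2 * (k + 1)) = exp (2 * log R * ((k : ℝ) + 1 - K)) * (C / ε) ^ 2 := by
      conv_lhs => rw [← exp_log (by linarith : 0 < R), ← exp_nat_mul]
      rw [← exp_log (div_pos hC hε), ← hKL, ← exp_nat_mul, ← exp_add]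
      push_cast; ring_nf
    rw [hpow, show (K * ε / C) ^ 2 * (exp (2 * log R * ((k : ℝ) + 1 - K)) * (C / ε) ^ 2)
      = K ^ 2 * exp (2 * log R * ((k : ℝ) + 1 - K)) by field_simp]
    exact sq_le_sq_add_sq_mul_exp hK (hKL ▸ hlog) (by positivity)
  have hxs : Summable fun k => x (k + 1) :=
    hRx.of_nonneg_of_le (fun k => hx _) fun k => le_mul_of_one_le_left (hx _) (one_le_pow₀ hR.le)
  have hsum := tsum_mul_le_of_le_add_mul (fun k => hx (k + 1)) (fun k => by positivity) hpt hxs hRx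
  rw [sqrt_le_iff, mul_div_assoc]
  refine ⟨by positivity, hsum.trans ?_⟩
  calc K ^ 2 * ∑' k, x (k + 1) + (K * ε / C) ^ 2 * ∑' k, R ^ (2 * (k + 1)) * x (k + 1)
      ≤ K ^ 2 * ε ^ 2 + (K * ε / C) ^ 2 * C ^ 2 := by gcongr
    _ = 2 * (ε * K) ^ 2 := by field_simp; ring
    _ ≤ (2 * ε * K) ^ 2 := by nlinarith [sq_nonneg (ε * K)]
end

section
/- Let (λ_k)_{k∈ℕ} be a sequence in (0,∞), let θ and ψ be index functions, and let g, h : ℕ → ℂ be sequences such that ∑ θ(λ_k)|g_k|² < ∞, ∑ θ(λ_k)|h_k|² ≤ ∑ θ(λ_k)|g_k|², ∑ ψ(λ_k)|g_k|² < ∞, and ∑ (θ(λ_k)²/ψ(λ_k))|h_k − g_k|² < ∞. Then, with r = h − g, ∑ θ(λ_k)|r_k|² ≤ 2·√(∑ ψ(λ_k)|g_k|²)·√(∑ (θ(λ_k)²/ψ(λ_k))|r_k|²). -/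
/-!
Expanding `‖h‖² = ‖g + r‖²` in the θ-weighted inner product, the hypothesis `‖h‖_θ ≤ ‖g‖_θ`
leaves `‖r‖_θ² ≤ -2 (g, r)_θ`. Splitting the weight θ as `√ψ · (θ / √ψ)`, the cross term is
bounded by Cauchy–Schwarz in ℓ² by `‖g‖_ψ ‖r‖_{θ²/ψ}`.
-/

open Set
open scoped RealInnerProductSpace

theorem Real.summable_and_tsum_mul_le_sqrt_mul_sqrt {ι : Type*} {f g : ι → ℝ}
    (hf : ∀ i, 0 ≤ f i) (hg : ∀ i, 0 ≤ g i)
    (hf₂ : Summable fun i => f i ^ 2) (hg₂ : Summable fun i => g i ^ 2) :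
    (Summable fun i => f i * g i) ∧
      ∑' i, f i * g i ≤ √(∑' i, f i ^ 2) * √(∑' i, g i ^ 2) := by
  simpa only [Real.rpow_two, ← Real.sqrt_eq_rpow] using
    Real.summable_and_inner_le_Lp_mul_Lq_tsum_of_nonneg .two_two hf hg
      (by simpa only [Real.rpow_two] using hf₂) (by simpa only [Real.rpow_two] using hg₂)

section WeightedSums

variable {ι E : Type*} [NormedAddCommGroup E] [InnerProductSpace ℝ E]

theorem summable_and_abs_tsum_mul_inner_le {w v : ι → ℝ} {x y : ι → E} (hv : ∀ i, 0 < v i)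
    (hx : Summable fun i => v i * ‖x i‖ ^ 2)
    (hy : Summable fun i => w i ^ 2 / v i * ‖y i‖ ^ 2) :
    (Summable fun i => w i * ⟪x i, y i⟫) ∧
      |∑' i, w i * ⟪x i, y i⟫| ≤
        √(∑' i, v i * ‖x i‖ ^ 2) * √(∑' i, w i ^ 2 / v i * ‖y i‖ ^ 2) := by
  set a : ι → ℝ := fun i => √(v i) * ‖x i‖
  set b : ι → ℝ := fun i => |w i| / √(v i) * ‖y i‖
  have ha : ∀ i, a i ^ 2 = v i * ‖x i‖ ^ 2 := fun i => by
    rw [mul_pow, Real.sq_sqrt (hv i).le]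
  have hb : ∀ i, b i ^ 2 = w i ^ 2 / v i * ‖y i‖ ^ 2 := fun i => by
    rw [mul_pow, div_pow, sq_abs, Real.sq_sqrt (hv i).le]
  have hab : ∀ i, ‖w i * ⟪x i, y i⟫‖ ≤ a i * b i := fun i => by
    have hsplit : a i * b i = |w i| * (‖x i‖ * ‖y i‖) := by
      have := (Real.sqrt_pos.2 (hv i)).ne'
      simp only [a, b]
      field_simp
    rw [hsplit, Real.norm_eq_abs, abs_mul]
    exact mul_le_mul_of_nonneg_left (abs_real_inner_le_norm _ _) (abs_nonneg _)
  obtain ⟨hsum, hcs⟩ := Real.summable_and_tsum_mul_le_sqrt_mul_sqrt (f := a) (g := b)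
    (fun i => by positivity) (fun i => by positivity)
    (by simpa only [ha] using hx) (by simpa only [hb] using hy)
  simp only [ha, hb] at hcs
  exact ⟨.of_norm_bounded hsum hab, (tsum_of_norm_bounded hsum.hasSum hab).trans hcs⟩

theorem tsum_mul_norm_sub_sq_le {θ : ι → ℝ} {g h : ι → E}
    (hg : Summable fun i => θ i * ‖g i‖ ^ 2) (hh : Summable fun i => θ i * ‖h i‖ ^ 2)
    (hgr : Summable fun i => θ i * ⟪g i, h i - g i⟫)
    (hle : ∑' i, θ i * ‖h i‖ ^ 2 ≤ ∑' i, θ i * ‖g i‖ ^ 2) :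
    ∑' i, θ i * ‖h i - g i‖ ^ 2 ≤ -2 * ∑' i, θ i * ⟪g i, h i - g i⟫ := by
  have hexpand : ∀ i, θ i * ‖h i - g i‖ ^ 2
      = θ i * ‖h i‖ ^ 2 - θ i * ‖g i‖ ^ 2 - 2 * (θ i * ⟪g i, h i - g i⟫) := fun i => by
    have := norm_add_sq_real (g i) (h i - g i)
    rw [add_sub_cancel] at this
    linear_combination -θ i * this
  rw [tsum_congr hexpand, (hh.sub hg).tsum_sub (hgr.mul_left 2), hh.tsum_sub hg, tsum_mul_left]
  linarith

end WeightedSums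

theorem generalised_morozov_estimate_general
    (lam : ℕ → ℝ) (hlam : ∀ k, 0 < lam k)
    (θ ψ : ℝ → ℝ)
    (hψp : ∀ x ∈ Ioi (0:ℝ), 0 < ψ x)
    (g h : ℕ → ℂ)
    (hgθ : Summable (fun k => θ (lam k) * ‖g k‖ ^ 2))
    (hhθ : Summable (fun k => θ (lam k) * ‖h k‖ ^ 2))
    (hle : (∑' k, θ (lam k) * ‖h k‖ ^ 2) ≤ ∑' k, θ (lam k) * ‖g k‖ ^ 2)
    (hgψ : Summable (fun k => ψ (lam k) * ‖g k‖ ^ 2))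
    (hrθψ : Summable (fun k => θ (lam k) ^ 2 / ψ (lam k) * ‖h k - g k‖ ^ 2)) :
    (∑' k, θ (lam k) * ‖h k - g k‖ ^ 2) ≤
      2 * Real.sqrt (∑' k, ψ (lam k) * ‖g k‖ ^ 2) *
        Real.sqrt (∑' k, θ (lam k) ^ 2 / ψ (lam k) * ‖h k - g k‖ ^ 2) := by
  obtain ⟨hcross, hcs⟩ :=
    summable_and_abs_tsum_mul_inner_le (fun k => hψp _ (hlam k)) hgψ hrθψ
  have hmorozov := tsum_mul_norm_sub_sq_le hgθ hhθ hcross hle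
  have := neg_abs_le (∑' k, θ (lam k) * ⟪g k, h k - g k⟫)
  linarith

/-- **Generalised Morozov estimate** (Section 3.2).  In a variable Hilbert scale
with spectral values `λ_k > 0` and index functions `θ, ψ`, if the sequences
`g, h : ℕ → ℂ` satisfy `∑ θ(λ_k)|g_k|² < ∞`, `∑ θ(λ_k)|h_k|² ≤ ∑ θ(λ_k)|g_k|²`,
`∑ ψ(λ_k)|g_k|² < ∞` and `∑ (θ(λ_k)²/ψ(λ_k))|h_k - g_k|² < ∞`, then with
`r = h - g`:  `∑ θ(λ_k)|r_k|² ≤ 2 √(∑ ψ(λ_k)|g_k|²) √(∑ (θ(λ_k)²/ψ(λ_k))|r_k|²)`. -/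
theorem generalised_morozov_estimate
    (lam : ℕ → ℝ) (hlam : ∀ k, 0 < lam k)
    (θ ψ : ℝ → ℝ) (hθm : Measurable θ) (hψm : Measurable ψ)
    (hθp : ∀ x ∈ Ioi (0:ℝ), 0 < θ x) (hψp : ∀ x ∈ Ioi (0:ℝ), 0 < ψ x)
    (g h : ℕ → ℂ)
    (hgθ : Summable (fun k => θ (lam k) * ‖g k‖ ^ 2))
    (hhθ : Summable (fun k => θ (lam k) * ‖h k‖ ^ 2))
    (hle : (∑' k, θ (lam k) * ‖h k‖ ^ 2) ≤ ∑' k, θ (lam k) * ‖g k‖ ^ 2)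
    (hgψ : Summable (fun k => ψ (lam k) * ‖g k‖ ^ 2))
    (hrθψ : Summable (fun k => θ (lam k) ^ 2 / ψ (lam k) * ‖h k - g k‖ ^ 2)) :
    (∑' k, θ (lam k) * ‖h k - g k‖ ^ 2) ≤
      2 * Real.sqrt (∑' k, ψ (lam k) * ‖g k‖ ^ 2) *
        Real.sqrt (∑' k, θ (lam k) ^ 2 / ψ (lam k) * ‖h k - g k‖ ^ 2) :=
  generalised_morozov_estimate_general lam hlam θ ψ hψp g h hgθ hhθ hle hgψ hrθψ
end
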